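/- arXiv:2510.16638 — 2 statements merged into one kernel-verified Lean document; each statement's English description precedes it below -/
import Mathlib

section
/- Assume m = k (the case σ = τ, so S = {u ∈ ℤ^n : ⟨p_r, u⟩ ≥ 0 for r = 1, …, k} and the points form the group G_χ̄ = 𝔾_a^k ⋊ T). For a point y define z : S → K by z(u) := (−1)^{⟨p_1,u⟩ + … + ⟨p_k,u⟩} · y(−u − ∑_{r=1}^k ⟨p_r, u⟩·(e_1^{(r)} + e_2^{(r)})). Then: (a) for every u ∈ S the element −u − ∑_r ⟨p_r,u⟩(e_1^{(r)} + e_2^{(r)}) lies in S; (b) z is a point; (c) y*z = z*y = x_τ, i.e. z is the inverse of y. (This is the inverse-element formula of the Lemma in Section 9: χ^u(y^{−1}) = (−1)^{⟨p̄,u⟩} χ^{−u−⟨p̄,u⟩(ē_1+ē_2)}(y).) -/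
open Finset

def pairZ {n : ℕ} (v u : Fin n → ℤ) : ℤ := ∑ i, v i * u i

def InS {n m : ℕ} (q : Fin m → Fin n → ℤ) (u : Fin n → ℤ) : Prop :=
  ∀ j, 0 ≤ pairZ (q j) u

def IsPoint {n m : ℕ} {K : Type*} [Field K] (q : Fin m → Fin n → ℤ)
    (x : (Fin n → ℤ) → K) : Prop :=
  x 0 = 1 ∧ ∀ u v : Fin n → ℤ, InS q u → InS q v → x (u + v) = x u * x v

def Compatible {n m k : ℕ} (hkm : k ≤ m) (q : Fin m → Fin n → ℤ)
    (e : Fin k → Fin n → ℤ) : Prop :=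
  (∀ r s : Fin k, pairZ (q (Fin.castLE hkm s)) (e r) = if r = s then -1 else 0) ∧
  (∀ (r : Fin k) (j : Fin m), k ≤ (j : ℕ) → 0 ≤ pairZ (q j) (e r))

noncomputable def rmul {n m k : ℕ} {K : Type*} [Field K] (hkm : k ≤ m)
    (q : Fin m → Fin n → ℤ) (e1 e2 : Fin k → Fin n → ℤ)
    (x y : (Fin n → ℤ) → K) : (Fin n → ℤ) → K :=
  fun u =>
    ∑ i ∈ Fintype.piFinset (fun r : Fin k =>
        Finset.range ((pairZ (q (Fin.castLE hkm r)) u).toNat + 1)),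
      (∏ r : Fin k, ((pairZ (q (Fin.castLE hkm r)) u).toNat.choose (i r) : K)) *
        x (u + ∑ r : Fin k, (i r : ℤ) • e2 r) *
        y (u + ∑ r : Fin k, (pairZ (q (Fin.castLE hkm r)) u - (i r : ℤ)) • e1 r)

noncomputable def xtau {n m k : ℕ} (K : Type*) [Field K] (hkm : k ≤ m)
    (q : Fin m → Fin n → ℤ) : (Fin n → ℤ) → K :=
  fun u => if ∀ r : Fin k, pairZ (q (Fin.castLE hkm r)) u = 0 then 1 else 0

/-! `charInv u = -u - ∑ ⟨p_r,u⟩ (e₁⁽ʳ⁾ + e₂⁽ʳ⁾)` is additive, preserves every pairing `⟨p_s, ·⟩`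
and swaps `e₁⁽ʳ⁾ ↔ e₂⁽ʳ⁾`. Hence it maps `S` to itself and `z` is a point. In the `i`-th summand of
`y * z` (resp. `z * y`) multiplicativity of `y` merges the two factors into the single value
`y(-∑ ⟨p_r,u⟩ e₁⁽ʳ⁾)` (resp. `e₂⁽ʳ⁾`), independent of `i`, so by the binomial theorem the sum is
that value times `∏_r (-1 + 1)^⟨p_r,u⟩`, which is `x_τ(u)`. -/

section Pairing

variable {n : ℕ}

@[simp] lemma pairZ_zero (v : Fin n → ℤ) : pairZ v 0 = 0 := dotProduct_zero v

@[simp] lemma pairZ_add (v u w : Fin n → ℤ) : pairZ v (u + w) = pairZ v u + pairZ v w :=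
  dotProduct_add v u w

@[simp] lemma pairZ_neg (v u : Fin n → ℤ) : pairZ v (-u) = -pairZ v u := dotProduct_neg v u

@[simp] lemma pairZ_sub (v u w : Fin n → ℤ) : pairZ v (u - w) = pairZ v u - pairZ v w :=
  dotProduct_sub v u w

@[simp] lemma pairZ_smul (v : Fin n → ℤ) (c : ℤ) (u : Fin n → ℤ) :
    pairZ v (c • u) = c * pairZ v u :=
  dotProduct_smul c v u

@[simp] lemma pairZ_sum {ι : Type*} (v : Fin n → ℤ) (s : Finset ι) (f : ι → Fin n → ℤ) :
    pairZ v (∑ i ∈ s, f i) = ∑ i ∈ s, pairZ v (f i) :=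
  dotProduct_sum v s f

end Pairing

lemma zpow_sum_natCast {G ι : Type*} [DivisionCommMonoid G] (s : Finset ι) (x : G) (m : ι → ℕ) :
    x ^ (∑ i ∈ s, (m i : ℤ)) = ∏ i ∈ s, x ^ m i := by
  rw [← Nat.cast_sum, zpow_natCast, prod_pow_eq_pow_sum]

lemma sum_piFinset_prod_eq_prod_add_pow {ι R : Type*} [Fintype ι] [DecidableEq ι]
    [CommSemiring R] (a b : R) (N : ι → ℕ) :
    ∑ i ∈ Fintype.piFinset (fun r => range (N r + 1)),
      ∏ r, a ^ i r * b ^ (N r - i r) * (N r).choose (i r) = ∏ r, (a + b) ^ N r := by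
  rw [prod_congr rfl fun r _ => add_pow a b (N r), prod_univ_sum]

namespace Compatible

variable {n k : ℕ} {q e : Fin k → Fin n → ℤ}

lemma pairZ_eq_ite (he : Compatible (le_refl k) q e) (r s : Fin k) :
    pairZ (q s) (e r) = if r = s then -1 else 0 :=
  he.1 r s

lemma pairZ_sum_smul (he : Compatible (le_refl k) q e) (a : Fin k → ℤ) (s : Fin k) :
    pairZ (q s) (∑ r, a r • e r) = -a s := by
  simp only [pairZ_sum, pairZ_smul, he.pairZ_eq_ite, mul_ite, mul_neg, mul_one, mul_zero,
    sum_ite_eq', mem_univ, if_true]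

lemma sum_pairZ_smul {M : Type*} [AddCommGroup M] (he : Compatible (le_refl k) q e)
    (r : Fin k) (f : Fin k → M) : ∑ s, pairZ (q s) (e r) • f s = -f r := by
  simp [he.pairZ_eq_ite]

end Compatible

section Inverse

variable {n k : ℕ} {K : Type*} [Field K] {q e1 e2 : Fin k → Fin n → ℤ}

variable (q e1 e2) in
/-- The exponent map of the inversion formula `χ^u(y⁻¹) = (-1)^⟨p̄,u⟩ χ^(charInv u)(y)`. -/
def charInv : (Fin n → ℤ) →+ (Fin n → ℤ) where
  toFun u := -u - ∑ r, pairZ (q r) u • (e1 r + e2 r)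
  map_zero' := by simp
  map_add' u v := by simp only [pairZ_add, add_smul, sum_add_distrib]; abel

variable (q e1 e2) in
noncomputable def pointInv (y : (Fin n → ℤ) → K) : (Fin n → ℤ) → K :=
  fun u => (-1 : K) ^ (∑ r, pairZ (q r) u) * y (charInv q e1 e2 u)

lemma charInv_apply (u : Fin n → ℤ) :
    charInv q e1 e2 u = -u - ∑ r, pairZ (q r) u • (e1 r + e2 r) := rfl

lemma add_charInv (u : Fin n → ℤ) :
    u + charInv q e1 e2 u = -∑ r, pairZ (q r) u • (e1 r + e2 r) := by
  rw [charInv_apply]; abel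

lemma pairZ_charInv (he1 : Compatible (le_refl k) q e1) (he2 : Compatible (le_refl k) q e2)
    (s : Fin k) (u : Fin n → ℤ) : pairZ (q s) (charInv q e1 e2 u) = pairZ (q s) u := by
  simp only [charInv_apply, pairZ_sub, pairZ_neg, smul_add, sum_add_distrib, pairZ_add,
    he1.pairZ_sum_smul, he2.pairZ_sum_smul]
  ring

lemma InS.charInv (he1 : Compatible (le_refl k) q e1) (he2 : Compatible (le_refl k) q e2)
    {u : Fin n → ℤ} (hu : InS q u) : InS q (charInv q e1 e2 u) := fun s => by
  rw [pairZ_charInv he1 he2]; exact hu s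

lemma charInv_sum_smul_left (he1 : Compatible (le_refl k) q e1) (c : Fin k → ℤ) :
    charInv q e1 e2 (∑ r, c r • e1 r) = ∑ r, c r • e2 r := by
  simp only [map_sum, map_zsmul, charInv_apply, he1.sum_pairZ_smul, sub_neg_eq_add,
    neg_add_cancel_left]

lemma charInv_sum_smul_right (he2 : Compatible (le_refl k) q e2) (c : Fin k → ℤ) :
    charInv q e1 e2 (∑ r, c r • e2 r) = ∑ r, c r • e1 r := by
  simp only [map_sum, map_zsmul, charInv_apply, he2.sum_pairZ_smul, sub_neg_eq_add,
    neg_add_cancel_comm_assoc]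

lemma isPoint_pointInv (he1 : Compatible (le_refl k) q e1) (he2 : Compatible (le_refl k) q e2)
    {y : (Fin n → ℤ) → K} (hy : IsPoint q y) : IsPoint q (pointInv q e1 e2 y) := by
  refine ⟨by simp [pointInv, hy.1], fun u v hu hv => ?_⟩
  simp only [pointInv, map_add, pairZ_add, sum_add_distrib,
    zpow_add₀ (by norm_num : (-1 : K) ≠ 0), hy.2 _ _ (hu.charInv he1 he2) (hv.charInv he1 he2)]
  ring

lemma pointInv_apply_of_pairZ_eq {y : (Fin n → ℤ) → K} {w : Fin n → ℤ} {m : Fin k → ℕ}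
    (hw : ∀ r, pairZ (q r) w = m r) :
    pointInv q e1 e2 y w = (∏ r, (-1 : K) ^ m r) * y (charInv q e1 e2 w) := by
  simp only [pointInv, hw, zpow_sum_natCast]

end Inverse

section Product

variable {n k : ℕ} {K : Type*} [Field K] {q e1 e2 : Fin k → Fin n → ℤ}

lemma rmul_eq_prod_add_pow_mul {x y : (Fin n → ℤ) → K} {u : Fin n → ℤ} (a b c : K)
    (hterm : ∀ i : Fin k → ℕ, (∀ r, i r ≤ (pairZ (q r) u).toNat) →
      x (u + ∑ r, (i r : ℤ) • e2 r) * y (u + ∑ r, (pairZ (q r) u - i r) • e1 r) =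
        (∏ r, a ^ i r * b ^ ((pairZ (q r) u).toNat - i r)) * c) :
    rmul (le_refl k) q e1 e2 x y u = (∏ r, (a + b) ^ (pairZ (q r) u).toNat) * c := by
  classical
  rw [← sum_piFinset_prod_eq_prod_add_pow, sum_mul]
  refine sum_congr rfl fun i hi => ?_
  have hi' : ∀ r, i r ≤ (pairZ (q r) u).toNat := fun r =>
    Nat.lt_succ_iff.mp (mem_range.mp (Fintype.mem_piFinset.mp hi r))
  simp only [Fin.castLE_rfl, id, mul_assoc, hterm i hi', prod_mul_distrib]
  ring

lemma prod_zero_pow_mul_eq_xtau {y : (Fin n → ℤ) → K} (hy : IsPoint q y) {u : Fin n → ℤ}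
    (hu : InS q u) (e : Fin k → Fin n → ℤ) :
    (∏ r, (0 : K) ^ (pairZ (q r) u).toNat) * y (-∑ r, pairZ (q r) u • e r) =
      xtau K (le_refl k) q u := by
  by_cases h : ∀ r, pairZ (q r) u = 0
  · simp [xtau, h, hy.1]
  · obtain ⟨r, hr⟩ := not_forall.mp h
    have hN : (pairZ (q r) u).toNat ≠ 0 := by have := hu r; omega
    rw [prod_eq_zero (mem_univ r) (zero_pow hN), zero_mul, xtau, if_neg fun h => hr (h r)]

variable (he1 : Compatible (le_refl k) q e1) (he2 : Compatible (le_refl k) q e2)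
  {y : (Fin n → ℤ) → K} (hy : IsPoint q y)
include he1 he2 hy

lemma point_mul_pointInv_term {u : Fin n → ℤ} (hu : InS q u) {i : Fin k → ℕ}
    (hi : ∀ r, i r ≤ (pairZ (q r) u).toNat) :
    y (u + ∑ r, (i r : ℤ) • e2 r) * pointInv q e1 e2 y (u + ∑ r, (pairZ (q r) u - i r) • e1 r) =
      (∏ r, (-1 : K) ^ i r * 1 ^ ((pairZ (q r) u).toNat - i r)) *
        y (-∑ r, pairZ (q r) u • e1 r) := by
  have hw : ∀ s, pairZ (q s) (u + ∑ r, (pairZ (q r) u - i r) • e1 r) = i s := fun s => by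
    rw [pairZ_add, he1.pairZ_sum_smul]; ring
  have hwS : InS q (u + ∑ r, (pairZ (q r) u - i r) • e1 r) := fun s => by
    rw [hw]; positivity
  have haS : InS q (u + ∑ r, (i r : ℤ) • e2 r) := fun s => by
    rw [pairZ_add, he2.pairZ_sum_smul]; have := hi s; have := hu s; omega
  rw [pointInv_apply_of_pairZ_eq hw, mul_left_comm, ← hy.2 _ _ haS (hwS.charInv he1 he2),
    map_add, charInv_sum_smul_left he1]
  simp only [one_pow, mul_one]
  congr 2
  rw [add_add_add_comm, add_charInv, ← sum_add_distrib]
  simp only [← add_smul, add_sub_cancel, smul_add, sum_add_distrib]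
  abel

lemma pointInv_mul_point_term {u : Fin n → ℤ} (hu : InS q u) {i : Fin k → ℕ}
    (hi : ∀ r, i r ≤ (pairZ (q r) u).toNat) :
    pointInv q e1 e2 y (u + ∑ r, (i r : ℤ) • e2 r) * y (u + ∑ r, (pairZ (q r) u - i r) • e1 r) =
      (∏ r, (1 : K) ^ i r * (-1) ^ ((pairZ (q r) u).toNat - i r)) *
        y (-∑ r, pairZ (q r) u • e2 r) := by
  have hw : ∀ s, pairZ (q s) (u + ∑ r, (i r : ℤ) • e2 r) = ((pairZ (q s) u).toNat - i s : ℕ) :=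
    fun s => by
      rw [pairZ_add, he2.pairZ_sum_smul, Nat.cast_sub (hi s), Int.toNat_of_nonneg (hu s)]; ring
  have hwS : InS q (u + ∑ r, (i r : ℤ) • e2 r) := fun s => by
    rw [hw]; positivity
  have hbS : InS q (u + ∑ r, (pairZ (q r) u - i r) • e1 r) := fun s => by
    rw [pairZ_add, he1.pairZ_sum_smul]; omega
  rw [pointInv_apply_of_pairZ_eq hw, mul_assoc, ← hy.2 _ _ (hwS.charInv he1 he2) hbS,
    map_add, charInv_sum_smul_right he2]
  simp only [one_pow, one_mul]
  congr 2
  rw [add_add_add_comm, add_comm (charInv q e1 e2 u), add_charInv, ← sum_add_distrib]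
  simp only [← add_smul, add_sub_cancel, smul_add, sum_add_distrib]
  abel

end Product

theorem statement_5_general {n k : ℕ} {K : Type*} [Field K]
    (q : Fin k → Fin n → ℤ) (e1 e2 : Fin k → Fin n → ℤ)
    (he1 : Compatible (le_refl k) q e1) (he2 : Compatible (le_refl k) q e2)
    (y : (Fin n → ℤ) → K) (hy : IsPoint q y)
    (z : (Fin n → ℤ) → K)
    (hz : ∀ u : Fin n → ℤ,
      z u = (-1 : K) ^ (∑ r : Fin k, pairZ (q r) u) *
        y (-u - ∑ r : Fin k, pairZ (q r) u • (e1 r + e2 r))) :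
    (∀ u : Fin n → ℤ, InS q u →
        InS q (-u - ∑ r : Fin k, pairZ (q r) u • (e1 r + e2 r))) ∧
    IsPoint q z ∧
    (∀ u : Fin n → ℤ, InS q u →
        rmul (le_refl k) q e1 e2 y z u = xtau K (le_refl k) q u ∧
        rmul (le_refl k) q e1 e2 z y u = xtau K (le_refl k) q u) := by
  obtain rfl : z = pointInv q e1 e2 y := funext hz
  refine ⟨fun u hu => hu.charInv he1 he2, isPoint_pointInv he1 he2 hy, fun u hu => ⟨?_, ?_⟩⟩
  · rw [rmul_eq_prod_add_pow_mul (-1) 1 _ fun i hi => point_mul_pointInv_term he1 he2 hy hu hi,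
      neg_add_cancel, prod_zero_pow_mul_eq_xtau hy hu]
  · rw [rmul_eq_prod_add_pow_mul 1 (-1) _ fun i hi => pointInv_mul_point_term he1 he2 hy hu hi,
      add_neg_cancel, prod_zero_pow_mul_eq_xtau hy hu]

theorem statement_5 {n k : ℕ} {K : Type*} [Field K] [CharZero K]
    (hn : 1 ≤ n) (hk : 1 ≤ k)
    (q : Fin k → Fin n → ℤ) (e1 e2 : Fin k → Fin n → ℤ)
    (he1 : Compatible (le_refl k) q e1) (he2 : Compatible (le_refl k) q e2)
    (y : (Fin n → ℤ) → K) (hy : IsPoint q y)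
    (z : (Fin n → ℤ) → K)
    (hz : ∀ u : Fin n → ℤ,
      z u = (-1 : K) ^ (∑ r : Fin k, pairZ (q r) u) *
        y (-u - ∑ r : Fin k, pairZ (q r) u • (e1 r + e2 r))) :
    (∀ u : Fin n → ℤ, InS q u →
        InS q (-u - ∑ r : Fin k, pairZ (q r) u • (e1 r + e2 r))) ∧
    IsPoint q z ∧
    (∀ u : Fin n → ℤ, InS q u →
        rmul (le_refl k) q e1 e2 y z u = xtau K (le_refl k) q u ∧
        rmul (le_refl k) q e1 e2 z y u = xtau K (le_refl k) q u) :=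
  statement_5_general q e1 e2 he1 he2 y hy z hz
end

section
/- Fix 0 ≤ s ≤ k and a subset J ⊆ {1, …, m} with J ∩ {1, …, s} = ∅ and {s+1, …, k} ⊆ J (the indices of the ray generators of a face γ of σ containing p_{s+1}, …, p_k but not p_1, …, p_s). Assume: (i) there exists m_0 ∈ ℤ^n with ⟨q_j, m_0⟩ = 0 for all j ∈ J and ⟨q_j, m_0⟩ > 0 for all j ∉ J (γ is a face of σ); (ii) for each r = 1, …, s there is a vector e^{(r)} ∈ ℤ^n with ⟨p_i, e^{(r)}⟩ = −δ_{ir} for all i ≤ k, ⟨q_j, e^{(r)}⟩ ≥ 0 for all j > k, and ⟨q_j, e^{(r)}⟩ = 0 for all j ∈ J (a Demazure root compatible with τ lying in γ^⊥). Then there exists m' ∈ ℤ^n with ⟨q_j, m'⟩ = 0 for all j ∈ J ∪ {1, …, s} and ⟨q_j, m'⟩ > 0 for all j ∉ J ∪ {1, …, s}. (This is Lemma 7.2: cone(p_1, …, p_s, γ) is a face of the cone σ.) -/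
/-!
Take `m' = m₀ + ∑ r, ⟨p_r, m₀⟩ • e⁽ʳ⁾`. Each root `e⁽ʳ⁾` lowers the value on `p_r` by exactly
`⟨p_r, m₀⟩ > 0` and leaves the other `p_i` alone, vanishes on `γ`, and does not decrease the values
on the `q_j` with `j > k`; so `m'` vanishes on `p_1, …, p_s` and on `γ` and stays positive elsewhere.
-/

open Finset

open Matrix

lemma pairZ_eq_dotProduct {n : ℕ} (v u : Fin n → ℤ) : pairZ v u = v ⬝ᵥ u := rfl

lemma pairZ_add_sum_smul {n s : ℕ} (v u : Fin n → ℤ) (c : Fin s → ℤ) (w : Fin s → Fin n → ℤ) :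
    pairZ v (u + ∑ r, c r • w r) = pairZ v u + ∑ r, c r * pairZ v (w r) := by
  simp only [pairZ_eq_dotProduct, dotProduct_add, dotProduct_sum, dotProduct_smul, smul_eq_mul]

lemma sum_mul_neg_kronecker {s : ℕ} (c : Fin s → ℤ) (i : Fin s) :
    ∑ r, c r * (if (i : ℕ) = r then -1 else 0) = -c i := by
  simp [Fin.val_inj]

theorem statement_10_general {n m k : ℕ} (hkm : k ≤ m)
    (q : Fin m → Fin n → ℤ)
    (s : ℕ) (hs : s ≤ k) (J : Finset (Fin m))
    (hJs : ∀ j ∈ J, ¬ (j : ℕ) < s)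
    (hJk : ∀ j : Fin m, s ≤ (j : ℕ) → (j : ℕ) < k → j ∈ J)
    (hface : ∃ m0 : Fin n → ℤ, (∀ j ∈ J, pairZ (q j) m0 = 0) ∧
      ∀ j ∉ J, 0 < pairZ (q j) m0)
    (e : Fin s → Fin n → ℤ)
    (he1 : ∀ (r : Fin s) (i : Fin k), pairZ (q (Fin.castLE hkm i)) (e r) =
      if (i : ℕ) = (r : ℕ) then -1 else 0)
    (he2 : ∀ (r : Fin s) (j : Fin m), k ≤ (j : ℕ) → 0 ≤ pairZ (q j) (e r))
    (he3 : ∀ (r : Fin s), ∀ j ∈ J, pairZ (q j) (e r) = 0) :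
    ∃ m' : Fin n → ℤ,
      (∀ j : Fin m, (j ∈ J ∨ (j : ℕ) < s) → pairZ (q j) m' = 0) ∧
      ∀ j : Fin m, j ∉ J → ¬ (j : ℕ) < s → 0 < pairZ (q j) m' := by
  obtain ⟨m0, hm0J, hm0pos⟩ := hface
  set c : Fin s → ℤ := fun r => pairZ (q (Fin.castLE (hs.trans hkm) r)) m0
  have hc_pos : ∀ r, 0 < c r := fun r => hm0pos _ fun h => hJs _ h r.isLt
  refine ⟨m0 + ∑ r, c r • e r, ?_, fun j hjJ hjs => ?_⟩
  · rintro j (hj | hj)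
    · rw [pairZ_add_sum_smul, hm0J j hj]
      simp [he3 _ j hj]
    · have hj_eq : j = Fin.castLE hkm ⟨j, hj.trans_le hs⟩ := rfl
      rw [pairZ_add_sum_smul, hj_eq]
      simp only [he1]
      rw [sum_mul_neg_kronecker c ⟨j, hj⟩]
      exact add_neg_cancel _
  · have hkj : k ≤ (j : ℕ) := by
      by_contra! h
      exact hjJ (hJk j (not_lt.mp hjs) h)
    rw [pairZ_add_sum_smul]
    exact add_pos_of_pos_of_nonneg (hm0pos j hjJ)
      (sum_nonneg fun r _ => mul_nonneg (hc_pos r).le (he2 r j hkj))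

theorem statement_10 {n m k : ℕ} (hn : 1 ≤ n) (hk : 1 ≤ k) (hkm : k ≤ m)
    (q : Fin m → Fin n → ℤ)
    (s : ℕ) (hs : s ≤ k) (J : Finset (Fin m))
    (hJs : ∀ j ∈ J, ¬ (j : ℕ) < s)
    (hJk : ∀ j : Fin m, s ≤ (j : ℕ) → (j : ℕ) < k → j ∈ J)
    (hface : ∃ m0 : Fin n → ℤ, (∀ j ∈ J, pairZ (q j) m0 = 0) ∧
      ∀ j ∉ J, 0 < pairZ (q j) m0)
    (e : Fin s → Fin n → ℤ)
    (he1 : ∀ (r : Fin s) (i : Fin k), pairZ (q (Fin.castLE hkm i)) (e r) =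
      if (i : ℕ) = (r : ℕ) then -1 else 0)
    (he2 : ∀ (r : Fin s) (j : Fin m), k ≤ (j : ℕ) → 0 ≤ pairZ (q j) (e r))
    (he3 : ∀ (r : Fin s), ∀ j ∈ J, pairZ (q j) (e r) = 0) :
    ∃ m' : Fin n → ℤ,
      (∀ j : Fin m, (j ∈ J ∨ (j : ℕ) < s) → pairZ (q j) m' = 0) ∧
      ∀ j : Fin m, j ∉ J → ¬ (j : ℕ) < s → 0 < pairZ (q j) m' :=
  statement_10_general hkm q s hs J hJs hJk hface e he1 he2 he3
end
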